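/- For ρ > 1, the function F_ρ(s) := -(s - s/(ρ·k_ρ(s))) is strictly decreasing on the open interval (0,1). -/

import Mathlib

/-! k = k_ρ(s) is the positive root of K² = ρ(1 - s²)K + s², which turns s - s/(ρk) into
((ρ² - 1)/ρ) / ((k + ρs²)/s). For s > 0 the denominator equals
(ρ/2)(s + 1/s) + √((ρ/2)²(1/s - s)² + 1), the sum of a strictly decreasing and a decreasing
function on (0, 1]; since ρ² > 1, the claim follows. -/

open Set Real

noncomputable def kRho (ρ s : ℝ) : ℝ := ρ / 2 * (1 - s ^ 2) + √(ρ ^ 2 / 4 * (1 - s ^ 2) ^ 2 + s ^ 2)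

lemma kRho_sq (ρ s : ℝ) : kRho ρ s ^ 2 = ρ * (1 - s ^ 2) * kRho ρ s + s ^ 2 := by
  have h := sq_sqrt (show 0 ≤ ρ ^ 2 / 4 * (1 - s ^ 2) ^ 2 + s ^ 2 by positivity)
  unfold kRho
  linear_combination h

lemma kRho_pos (ρ : ℝ) {s : ℝ} (hs : s ≠ 0) : 0 < kRho ρ s := by
  have : |ρ / 2 * (1 - s ^ 2)| < √(ρ ^ 2 / 4 * (1 - s ^ 2) ^ 2 + s ^ 2) := by
    rw [lt_sqrt (abs_nonneg _), sq_abs]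
    nlinarith [pow_pos (abs_pos.2 hs) 2, sq_abs s]
  unfold kRho
  linarith [neg_abs_le (ρ / 2 * (1 - s ^ 2))]

lemma kRho_add_mul_sq_div {ρ s : ℝ} (hs : 0 < s) :
    (kRho ρ s + ρ * s ^ 2) / s = ρ / 2 * (s + s⁻¹) + √((ρ / 2 * (s⁻¹ - s)) ^ 2 + 1) := by
  have hsqrt : s * √((ρ / 2 * (s⁻¹ - s)) ^ 2 + 1) = √(ρ ^ 2 / 4 * (1 - s ^ 2) ^ 2 + s ^ 2) := by
    rw [← sqrt_sq hs.le, ← sqrt_mul (sq_nonneg s), sqrt_sq hs.le]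
    congr 1
    field_simp
    ring
  rw [kRho, ← hsqrt]
  field_simp
  ring

lemma strictAntiOn_add_inv : StrictAntiOn (fun s : ℝ => s + s⁻¹) (Ioc 0 1) := by
  intro a ⟨ha, ha1⟩ b ⟨hb, hb1⟩ hab
  have hab1 : a * b < 1 := by nlinarith
  have hdiff : a + a⁻¹ - (b + b⁻¹) = (b - a) * (1 - a * b) / (a * b) := by
    field_simp
    ring
  have : 0 < (b - a) * (1 - a * b) / (a * b) :=
    div_pos (mul_pos (sub_pos.2 hab) (sub_pos.2 hab1)) (mul_pos ha hb)
  linarith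

lemma antitoneOn_sqrt_sq_mul_inv_sub_add_one {ρ : ℝ} (hρ : 0 ≤ ρ) :
    AntitoneOn (fun s : ℝ => √((ρ / 2 * (s⁻¹ - s)) ^ 2 + 1)) (Ioc 0 1) := by
  intro a ⟨ha, _⟩ b ⟨hb, hb1⟩ hab
  have : b ≤ b⁻¹ := hb1.trans ((one_le_inv₀ hb).2 hb1)
  dsimp only
  gcongr

lemma strictAntiOn_kRho_add_mul_sq_div {ρ : ℝ} (hρ : 0 < ρ) :
    StrictAntiOn (fun s => (kRho ρ s + ρ * s ^ 2) / s) (Ioc 0 1) := by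
  have hmul : StrictAntiOn (fun s : ℝ => ρ / 2 * (s + s⁻¹)) (Ioc 0 1) :=
    fun a ha b hb hab => mul_lt_mul_of_pos_left (strictAntiOn_add_inv ha hb hab) (half_pos hρ)
  have h := hmul.add_antitone (antitoneOn_sqrt_sq_mul_inv_sub_add_one hρ.le)
  exact h.congr fun s hs => (kRho_add_mul_sq_div hs.1).symm

lemma kRho_add_mul_sq_pos {ρ s : ℝ} (hρ : 0 < ρ) (hs : s ≠ 0) : 0 < kRho ρ s + ρ * s ^ 2 := by
  have := kRho_pos ρ hs
  positivity

lemma sub_div_mul_kRho {ρ s : ℝ} (hρ : 0 < ρ) (hs : s ≠ 0) :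
    s - s / (ρ * kRho ρ s) = (ρ ^ 2 - 1) / ρ / ((kRho ρ s + ρ * s ^ 2) / s) := by
  have hK := kRho_pos ρ hs
  have hQ := kRho_add_mul_sq_pos hρ hs
  field_simp
  linear_combination ρ * kRho_sq ρ s

theorem F_rho_strictAnti (ρ : ℝ) (hρ : 1 < ρ) :
    StrictAntiOn
      (fun s : ℝ => -(s - s / (ρ * (ρ/2 * (1 - s^2) + Real.sqrt (ρ^2/4 * (1 - s^2)^2 + s^2)))))
      (Set.Ioo (0:ℝ) 1) := by
  have hρ0 : 0 < ρ := one_pos.trans hρ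
  have hc : 0 < (ρ ^ 2 - 1) / ρ := div_pos (by nlinarith) hρ0
  intro a ha b hb hab
  change -(b - b / (ρ * kRho ρ b)) < -(a - a / (ρ * kRho ρ a))
  rw [sub_div_mul_kRho hρ0 ha.1.ne', sub_div_mul_kRho hρ0 hb.1.ne', neg_lt_neg_iff]
  exact div_lt_div_of_pos_left hc (div_pos (kRho_add_mul_sq_pos hρ0 hb.1.ne') hb.1)
    (strictAntiOn_kRho_add_mul_sq_div hρ0 (Ioo_subset_Ioc_self ha) (Ioo_subset_Ioc_self hb) hab)
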